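/- arXiv:1009.3260 — 2 statements merged into one kernel-verified Lean document; each statement's English description precedes it below -/
import Mathlib

section
/- The projection ρ : ℝfD°(n) → fD°(n) is a locally trivial fibre bundle, and the local trivializations can be chosen compatible with the boundary maps: for every a ∈ fD°(n) there exist an open neighbourhood U of a in fD°(n) and a homeomorphism Φ : ρ⁻¹(U) → U × |a| whose first coordinate is ρ, such that Φ(b, ∂_i^b(θ)) = (b, ∂_i^a(θ)) for all b ∈ U, all i ∈ {0,1,…,n} and all θ ∈ S¹. -/
/-- Ambient space of parameters for `n` framed little discs:
centres, radii, framings. -/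
abbrev Amb (n : ℕ) : Type := (Fin n → ℂ) × (Fin n → ℝ) × (Fin n → ℂ)

/-- The framed little discs operad space `fD(n)`: `n` disjoint framed little discs inside
the unit disc (the `i`-th little disc is `w ↦ zᵢ + rᵢαᵢw`). -/
def fD (n : ℕ) : Set (Amb n) :=
  {a | (∀ i, 0 < a.2.1 i) ∧ (∀ i, ‖a.1 i‖ + a.2.1 i ≤ 1) ∧
       (∀ i, ‖a.2.2 i‖ = 1) ∧
       ∀ i j, i ≠ j → a.2.1 i + a.2.1 j < ‖a.1 i - a.1 j‖}

/-- `fD°(n)`: the subspace of `fD(n)` where the little discs avoid the boundary circle. -/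
def fDo (n : ℕ) : Set (Amb n) :=
  {a | a ∈ fD n ∧ ∀ i, ‖a.1 i‖ + a.2.1 i < 1}

/-- The realization `|a|`: the closed unit disc minus the interiors of the little discs. -/
def realiz {n : ℕ} (a : Amb n) : Set ℂ :=
  {w | ‖w‖ ≤ 1 ∧ ∀ i, a.2.1 i ≤ ‖w - a.1 i‖}

/-- The boundary maps of `|a|`: `∂₀ = ∂_out` is the boundary of the big disc, and for
`i ≥ 1`, `∂ᵢ` is the boundary of the `i`-th little disc. -/
def bdry {n : ℕ} (a : Amb n) (i : Fin (n + 1)) (θ : ℂ) : ℂ :=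
  if h : i = 0 then θ
  else a.1 (i.pred h) + (a.2.1 (i.pred h) : ℂ) * a.2.2 (i.pred h) * θ

/-- The total space `ℝfD°(n)` of realizations over `fD°(n)`. -/
def RfDo (n : ℕ) : Set (↥(fDo n) × ℂ) :=
  {p | p.2 ∈ realiz (p.1 : Amb n)}

/-!
Near `a`, the fibre `|b|` is carried onto `|a|` by `w ↦ w + ∑ᵢ φᵢ(w) • (Aᵢ w - w)`, where `Aᵢ`
is the affine map taking the `i`-th little disc of `b` onto that of `a` (so `Aᵢ ∘ ∂ᵢᵇ = ∂ᵢᵃ`)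
and `φᵢ` is a bump that is `1` on a neighbourhood of the `i`-th little disc of `a` and vanishes
away from it. For `b` close to `a` the perturbation `∑ᵢ φᵢ • (Aᵢ - id)` is `1/2`-Lipschitz, so
the map is a bijection of `ℂ` with a Lipschitz inverse depending continuously on `b`. It is the
identity outside the unit disc and equals `Aᵢ` on the `i`-th little disc of `b`, hence it carries
the complement of `|b|` onto the complement of `|a|`, and therefore `|b|` onto `|a|`.
-/

open Function Filter Topology
open scoped NNReal

section Lipschitz

variable {α E : Type*} [PseudoEMetricSpace α] [SeminormedAddCommGroup E]

theorem LipschitzWith.finset_sum {ι : Type*} (s : Finset ι) {f : ι → α → E} {K : ι → ℝ≥0}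
    (hf : ∀ i ∈ s, LipschitzWith (K i) (f i)) :
    LipschitzWith (∑ i ∈ s, K i) fun x => ∑ i ∈ s, f i x := by
  classical
  induction s using Finset.induction_on with
  | empty => simpa using LipschitzWith.const (0 : E)
  | insert i s hi ih =>
    simp only [Finset.sum_insert hi]
    exact (hf i (s.mem_insert_self i)).add (ih fun j hj => hf j (Finset.mem_insert_of_mem hj))

end Lipschitz

section SMul

variable {α E : Type*} [PseudoMetricSpace α] [SeminormedAddCommGroup E] [NormedSpace ℝ E]

theorem LipschitzWith.smul_of_norm_le {φ : α → ℝ} {f : α → E} {Kφ Kf M : ℝ≥0}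
    (hφ : LipschitzWith Kφ φ) (hφ_le : ∀ x, |φ x| ≤ 1) (hf : LipschitzWith Kf f)
    (hM : ∀ x, φ x ≠ 0 → ‖f x‖ ≤ M) :
    LipschitzWith (Kφ * M + Kf) fun x => φ x • f x := by
  have key : ∀ x y, φ x ≠ 0 →
      dist (φ x • f x) (φ y • f y) ≤ (Kφ * M + Kf) * dist x y := by
    intro x y hx
    have hsplit : φ x • f x - φ y • f y = (φ x - φ y) • f x + φ y • (f x - f y) := by
      simp only [sub_smul, smul_sub]; abel
    rw [dist_eq_norm, hsplit]
    calc ‖(φ x - φ y) • f x + φ y • (f x - f y)‖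
        ≤ |φ x - φ y| * ‖f x‖ + |φ y| * ‖f x - f y‖ := by
          refine (norm_add_le _ _).trans_eq ?_
          rw [norm_smul, norm_smul, Real.norm_eq_abs, Real.norm_eq_abs]
      _ ≤ (Kφ * dist x y) * M + 1 * (Kf * dist x y) := by
          gcongr
          · rw [← Real.dist_eq]; exact hφ.dist_le_mul x y
          · exact hM x hx
          · exact hφ_le y
          · rw [← dist_eq_norm]; exact hf.dist_le_mul x y
      _ = (Kφ * M + Kf) * dist x y := by ring
  refine LipschitzWith.of_dist_le_mul fun x y => ?_
  by_cases hx : φ x = 0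
  · by_cases hy : φ y = 0
    · simp only [hx, hy, zero_smul, dist_self]; positivity
    · rw [dist_comm, dist_comm x]; exact key y x hy
  · exact key x y hx

end SMul

section Perturbation

variable {E : Type*} [NormedAddCommGroup E] {f : E → E} {K : ℝ≥0}

theorem antilipschitzWith_of_lipschitzWith_sub_id (hf : LipschitzWith K fun x => f x - x)
    (hK : K < 1) : AntilipschitzWith (1 - K)⁻¹ f := by
  simpa using AntilipschitzWith.id.add_sub_lipschitzWith hf (by simpa using hK)

theorem surjective_of_lipschitzWith_sub_id [CompleteSpace E]
    (hf : LipschitzWith K fun x => f x - x) (hK : K < 1) : Surjective f := by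
  intro v
  have hT : ContractingWith K fun w => v - (f w - w) :=
    ⟨hK, by simpa using (LipschitzWith.const v).sub hf⟩
  refine ⟨hT.fixedPoint _, ?_⟩
  have hfix := hT.fixedPoint_isFixedPt
  rw [IsFixedPt, sub_eq_iff_eq_add', sub_add_cancel] at hfix
  exact hfix.symm

end Perturbation

theorem continuous_uncurry_of_antilipschitzWith {X E E' : Type*} [TopologicalSpace X]
    [PseudoMetricSpace E] [PseudoMetricSpace E'] {F : X → E → E'} {G : X → E' → E} {K : ℝ≥0}
    (hF : Continuous (uncurry F)) (hF_anti : ∀ x, AntilipschitzWith K (F x))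
    (hFG : ∀ x v, F x (G x v) = v) : Continuous (uncurry G) := by
  rw [continuous_iff_continuousAt]
  rintro ⟨x₀, v₀⟩
  rw [ContinuousAt, tendsto_iff_dist_tendsto_zero]
  set w₀ := G x₀ v₀
  have hbound : ∀ q : X × E', dist (uncurry G q) w₀ ≤ K * dist q.2 (F q.1 w₀) := by
    rintro ⟨x, v⟩
    simpa [hFG] using (hF_anti x).le_mul_dist (G x v) w₀
  refine squeeze_zero (fun _ => dist_nonneg) hbound ?_
  have hlim : Tendsto (fun q : X × E' => (K : ℝ) * dist q.2 (F q.1 w₀)) (𝓝 (x₀, v₀))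
      (𝓝 (K * dist v₀ (F x₀ w₀))) :=
    (continuous_const.mul (continuous_snd.dist
      (hF.comp (continuous_fst.prodMk continuous_const)))).tendsto _
  simpa [w₀, hFG] using hlim

section Trivialization

variable {Y E : Type*} [TopologicalSpace Y] [NormedAddCommGroup E] [CompleteSpace E]
  {U : Set Y} {S : Set (Y × E)} {T : Set E} {F : U → E → E} {K : ℝ≥0}

/-- The homeomorphism `(y, w) ↦ (y, F y w)`. -/
noncomputable def homeomorphOfPerturbations (hF : Continuous (uncurry F)) (hK : K < 1)
    (hF_sub : ∀ y, LipschitzWith K fun w => F y w - w)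
    (hST : ∀ y w, (y.1, w) ∈ S ↔ F y w ∈ T) : {p : S // p.1.1 ∈ U} ≃ₜ U × T :=
  have hsurj y := surjective_of_lipschitzWith_sub_id (hF_sub y) hK
  have hanti y := antilipschitzWith_of_lipschitzWith_sub_id (hF_sub y) hK
  { toFun := fun p => (⟨p.1.1.1, p.2⟩, ⟨F ⟨_, p.2⟩ p.1.1.2, (hST _ _).1 p.1.2⟩)
    invFun := fun q => ⟨⟨(q.1.1, surjInv (hsurj q.1) q.2.1),
      (hST _ _).2 (by rw [surjInv_eq (hsurj q.1)]; exact q.2.2)⟩, q.1.2⟩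
    left_inv := fun p => by
      have := leftInverse_surjInv ⟨(hanti ⟨_, p.2⟩).injective, hsurj ⟨_, p.2⟩⟩ p.1.1.2
      ext <;> simp [this]
    right_inv := fun q => by ext <;> simp [surjInv_eq]
    continuous_toFun := by
      have hbase : Continuous fun p : {p : S // p.1.1 ∈ U} => (⟨p.1.1.1, p.2⟩ : U) := by
        fun_prop
      exact hbase.prodMk ((hF.comp (hbase.prodMk (by fun_prop))).subtype_mk _)
    continuous_invFun := by
      have hG : Continuous (uncurry fun y => surjInv (hsurj y)) :=
        continuous_uncurry_of_antilipschitzWith hF hanti fun y => surjInv_eq (hsurj y)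
      exact ((continuous_subtype_val.comp continuous_fst).prodMk
        (hG.comp (continuous_fst.prodMk (continuous_subtype_val.comp continuous_snd)))).subtype_mk _
        |>.subtype_mk _ }

end Trivialization

section Discs

variable {n : ℕ} {a b : Amb n} {i : Fin n}

noncomputable def discScale (a b : Amb n) (i : Fin n) : ℂ :=
  a.2.1 i * a.2.2 i / (b.2.1 i * b.2.2 i)

/-- The affine map sending `∂ᵢᵇ(θ)` to `∂ᵢᵃ(θ)`. -/
noncomputable def discMap (a b : Amb n) (i : Fin n) (w : ℂ) : ℂ :=
  a.1 i + discScale a b i * (w - b.1 i)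

theorem radius_mul_framing_ne_zero (hb : b ∈ fD n) (i : Fin n) :
    (b.2.1 i : ℂ) * b.2.2 i ≠ 0 := by
  have hα : b.2.2 i ≠ 0 := by
    rw [← norm_ne_zero_iff, hb.2.2.1 i]; exact one_ne_zero
  exact mul_ne_zero (Complex.ofReal_ne_zero.2 (hb.1 i).ne') hα

theorem discScale_mul (hb : b ∈ fD n) :
    discScale a b i * (b.2.1 i * b.2.2 i) = a.2.1 i * a.2.2 i :=
  div_mul_cancel₀ _ (radius_mul_framing_ne_zero hb i)

theorem norm_discScale (ha : a ∈ fD n) (hb : b ∈ fD n) :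
    ‖discScale a b i‖ = a.2.1 i / b.2.1 i := by
  rw [discScale, norm_div, norm_mul, norm_mul, ha.2.2.1 i, hb.2.2.1 i, Complex.norm_real,
    Complex.norm_real, Real.norm_of_nonneg (ha.1 i).le, Real.norm_of_nonneg (hb.1 i).le,
    mul_one, mul_one]

theorem norm_discMap_sub (ha : a ∈ fD n) (hb : b ∈ fD n) (w : ℂ) :
    ‖discMap a b i w - a.1 i‖ = a.2.1 i / b.2.1 i * ‖w - b.1 i‖ := by
  rw [discMap, add_sub_cancel_left, norm_mul, norm_discScale ha hb]

theorem discMap_surjective (ha : a ∈ fD n) (hb : b ∈ fD n) : Surjective (discMap a b i) := by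
  have hσ : discScale a b i ≠ 0 := by
    rw [← norm_ne_zero_iff, norm_discScale ha hb]; exact (div_pos (ha.1 i) (hb.1 i)).ne'
  intro v
  refine ⟨b.1 i + (v - a.1 i) / discScale a b i, ?_⟩
  rw [discMap, add_sub_cancel_left, mul_div_cancel₀ _ hσ, add_sub_cancel]

theorem discMap_bdry (hb : b ∈ fD n) (θ : ℂ) :
    discMap a b i (b.1 i + b.2.1 i * b.2.2 i * θ) = a.1 i + a.2.1 i * a.2.2 i * θ := by
  rw [discMap, add_sub_cancel_left, ← mul_assoc, discScale_mul hb]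

theorem discMap_sub_self (w : ℂ) :
    discMap a b i w - w = (discScale a b i - 1) * (w - b.1 i) + (a.1 i - b.1 i) := by
  rw [discMap]; ring

theorem lipschitzWith_discMap_sub_self :
    LipschitzWith ‖discScale a b i - 1‖₊ fun w => discMap a b i w - w := by
  refine LipschitzWith.of_dist_le_mul fun w w' => ?_
  rw [dist_eq_norm, dist_eq_norm, discMap_sub_self, discMap_sub_self, coe_nnnorm, ← norm_mul]
  exact (congrArg norm (by ring)).le

end Discs

section Bump

variable {c w : ℂ} {r ρ : ℝ}

noncomputable def bump (c : ℂ) (r ρ : ℝ) (w : ℂ) : ℝ :=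
  Set.projIcc (0 : ℝ) 1 zero_le_one ((r + 2 * ρ - ‖w - c‖) / ρ)

theorem bump_eq_one (hρ : 0 < ρ) (hw : ‖w - c‖ ≤ r + ρ) : bump c r ρ w = 1 := by
  rw [bump, Set.projIcc_of_right_le _ ((one_le_div hρ).2 (by linarith))]

theorem norm_sub_lt_of_bump_ne_zero (hρ : 0 < ρ) (hw : bump c r ρ w ≠ 0) :
    ‖w - c‖ < r + 2 * ρ := by
  by_contra! h
  refine hw ?_
  rw [bump, Set.projIcc_of_le_left _ (div_nonpos_of_nonpos_of_nonneg (by linarith) hρ.le)]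

theorem abs_bump_le_one : |bump c r ρ w| ≤ 1 := by
  obtain ⟨h0, h1⟩ : bump c r ρ w ∈ Set.Icc 0 1 := Subtype.prop _
  exact abs_le.2 ⟨by linarith, h1⟩

theorem lipschitzWith_bump (hρ : 0 < ρ) : LipschitzWith (Real.toNNReal ρ⁻¹) (bump c r ρ) := by
  have hlin : LipschitzWith (Real.toNNReal ρ⁻¹) fun w => (r + 2 * ρ - ‖w - c‖) / ρ := by
    refine LipschitzWith.of_dist_le' fun w w' => ?_
    rw [Real.dist_eq, ← sub_div, abs_div, abs_of_pos hρ, div_eq_inv_mul]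
    gcongr
    rw [dist_eq_norm]
    simpa [abs_sub_comm] using abs_norm_sub_norm_le (w - c) (w' - c)
  have := (LipschitzWith.subtype_val _).comp ((LipschitzWith.projIcc zero_le_one).comp hlin)
  rwa [one_mul, one_mul] at this

end Bump

section FibreMap

variable {n : ℕ} {a b : Amb n} {ρ : ℝ}

/-- The bumps of width `2ρ` around the little discs of `a` have pairwise disjoint supports
inside the unit disc. -/
structure IsMargin (a : Amb n) (ρ : ℝ) : Prop where
  pos : 0 < ρ
  outer : ∀ i, ‖a.1 i‖ + a.2.1 i + 2 * ρ ≤ 1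
  sep : ∀ i k, i ≠ k → a.2.1 i + a.2.1 k + 4 * ρ ≤ ‖a.1 i - a.1 k‖

theorem exists_isMargin (ha : a ∈ fDo n) : ∃ ρ, IsMargin a ρ := by
  have small : ∀ {k c : ℝ}, 0 < c → ∀ᶠ ρ in 𝓝 (0 : ℝ), k * ρ ≤ c := fun {k} _ hc =>
    ((continuous_const_mul k).tendsto' 0 0 (mul_zero k)).eventually (ge_mem_nhds hc)
  have houter : ∀ᶠ ρ in 𝓝 (0 : ℝ), ∀ i, 2 * ρ ≤ 1 - ‖a.1 i‖ - a.2.1 i :=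
    eventually_all.2 fun i => small (by linarith [ha.2 i])
  have hsep : ∀ᶠ ρ in 𝓝 (0 : ℝ), ∀ i k, i ≠ k → 4 * ρ ≤ ‖a.1 i - a.1 k‖ - a.2.1 i - a.2.1 k :=
    eventually_all.2 fun i => eventually_all.2 fun k => eventually_imp_distrib_left.2 fun hik =>
      small (by linarith [ha.1.2.2.2 i k hik])
  obtain ⟨ρ, hρ, hρ_outer, hρ_sep⟩ :=
    ((eventually_mem_nhdsWithin (a := (0 : ℝ)) (s := Set.Ioi 0)).and
      (nhdsWithin_le_nhds (houter.and hsep))).exists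
  exact ⟨ρ, hρ, fun i => by linarith [hρ_outer i], fun i k hik => by linarith [hρ_sep i k hik]⟩

noncomputable def fibreMap (a : Amb n) (ρ : ℝ) (b : Amb n) (w : ℂ) : ℂ :=
  w + ∑ i, bump (a.1 i) (a.2.1 i) ρ w • (discMap a b i w - w)

theorem IsMargin.bump_eq_zero_of_ne (hρ : IsMargin a ρ) {i k : Fin n} {w : ℂ}
    (hi : bump (a.1 i) (a.2.1 i) ρ w ≠ 0) (hki : k ≠ i) : bump (a.1 k) (a.2.1 k) ρ w = 0 := by
  by_contra hk
  have hwi := norm_sub_lt_of_bump_ne_zero hρ.pos hi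
  have hwk := norm_sub_lt_of_bump_ne_zero hρ.pos hk
  have htri := norm_sub_le_norm_sub_add_norm_sub (a.1 k) w (a.1 i)
  rw [norm_sub_rev (a.1 k) w] at htri
  linarith [hρ.sep k i hki]

theorem IsMargin.bump_eq_zero_of_one_le_norm (hρ : IsMargin a ρ) {w : ℂ} (hw : 1 ≤ ‖w‖)
    (i : Fin n) : bump (a.1 i) (a.2.1 i) ρ w = 0 := by
  by_contra hi
  linarith [norm_sub_lt_of_bump_ne_zero hρ.pos hi, norm_sub_norm_le w (a.1 i), hρ.outer i]

theorem IsMargin.fibreMap_eq_self (hρ : IsMargin a ρ) {w : ℂ} (hw : 1 ≤ ‖w‖) :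
    fibreMap a ρ b w = w := by
  simp [fibreMap, hρ.bump_eq_zero_of_one_le_norm hw]

theorem IsMargin.fibreMap_eq_discMap (hρ : IsMargin a ρ) {i : Fin n} {w : ℂ}
    (hdisc : ‖b.1 i - a.1 i‖ + b.2.1 i ≤ a.2.1 i + ρ) (hw : ‖w - b.1 i‖ ≤ b.2.1 i) :
    fibreMap a ρ b w = discMap a b i w := by
  have hone : bump (a.1 i) (a.2.1 i) ρ w = 1 := by
    refine bump_eq_one hρ.pos ?_
    linarith [norm_sub_le_norm_sub_add_norm_sub w (b.1 i) (a.1 i)]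
  have hothers : ∀ k ∈ Finset.univ, k ≠ i →
      bump (a.1 k) (a.2.1 k) ρ w • (discMap a b k w - w) = 0 := fun k _ hki => by
    rw [hρ.bump_eq_zero_of_ne (hone ▸ one_ne_zero) hki, zero_smul]
  rw [fibreMap, Finset.sum_eq_single_of_mem i (Finset.mem_univ i) hothers, hone, one_smul,
    add_sub_cancel]

def IsNear (a b : Amb n) (η : ℝ) : Prop :=
  ∀ i, ‖b.1 i - a.1 i‖ < η ∧ |b.2.1 i - a.2.1 i| < η ∧ ‖discScale a b i - 1‖ < η

theorem isNear_self (ha : a ∈ fD n) {η : ℝ} (hη : 0 < η) : IsNear a a η := fun i => by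
  simp [discScale, div_self (radius_mul_framing_ne_zero ha i), hη]

theorem IsNear.norm_sub_add_radius_le (hnear : IsNear a b (ρ / (8 * (n + 1)))) (hρ : 0 ≤ ρ)
    (i : Fin n) : ‖b.1 i - a.1 i‖ + b.2.1 i ≤ a.2.1 i + ρ := by
  have : ρ / (8 * (n + 1)) ≤ ρ / 2 := by
    gcongr
    linarith [(n.cast_nonneg : (0 : ℝ) ≤ n)]
  linarith [(hnear i).1, (abs_lt.1 (hnear i).2.1).2]

theorem IsMargin.norm_discMap_sub_self_le (hρ : IsMargin a ρ) {η : ℝ} (hnear : IsNear a b η)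
    (hη : η ≤ 1) {i : Fin n} {w : ℂ} (hw : bump (a.1 i) (a.2.1 i) ρ w ≠ 0) :
    ‖discMap a b i w - w‖ ≤ 3 * η := by
  obtain ⟨hz, -, hσ⟩ := hnear i
  have hwa := norm_sub_lt_of_bump_ne_zero hρ.pos hw
  have hwb : ‖w - b.1 i‖ ≤ 2 := by
    linarith [norm_sub_le_norm_sub_add_norm_sub w (a.1 i) (b.1 i), norm_sub_rev (a.1 i) (b.1 i),
      hρ.outer i, norm_nonneg (a.1 i)]
  calc ‖discMap a b i w - w‖
      ≤ ‖discScale a b i - 1‖ * ‖w - b.1 i‖ + ‖a.1 i - b.1 i‖ := by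
        rw [discMap_sub_self, ← norm_mul]; exact norm_add_le _ _
    _ ≤ η * 2 + η := by
        rw [norm_sub_rev (a.1 i)]
        gcongr
        exact (norm_nonneg _).trans hz.le
    _ = 3 * η := by ring

theorem IsMargin.lipschitzWith_bump_smul (hρ : IsMargin a ρ) (ha : a ∈ fD n)
    (hnear : IsNear a b (ρ / (8 * (n + 1)))) (i : Fin n) :
    LipschitzWith (Real.toNNReal (1 / (2 * (n + 1))))
      fun w => bump (a.1 i) (a.2.1 i) ρ w • (discMap a b i w - w) := by
  set η := ρ / (8 * (n + 1)) with hη_def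
  have hρ_le : ρ ≤ 1 := by linarith [hρ.outer i, ha.1 i, norm_nonneg (a.1 i)]
  have hη_le : η ≤ 1 / (8 * (n + 1)) := div_le_div_of_nonneg_right hρ_le (by positivity)
  have hη_le_one : η ≤ 1 := hη_le.trans <| by
    rw [div_le_one (by positivity)]
    linarith [(n.cast_nonneg : (0 : ℝ) ≤ n)]
  have h3η : 0 ≤ 3 * η := by have := hρ.pos; positivity
  have hsmul := (lipschitzWith_bump hρ.pos).smul_of_norm_le (M := Real.toNNReal (3 * η))
    (fun _ => abs_bump_le_one) (lipschitzWith_discMap_sub_self (i := i)) fun w hw => by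
      rw [Real.coe_toNNReal _ h3η]
      exact hρ.norm_discMap_sub_self_le hnear hη_le_one hw
  refine hsmul.weaken ?_
  rw [← NNReal.coe_le_coe]
  push_cast
  rw [Real.coe_toNNReal _ (inv_pos.2 hρ.pos).le, Real.coe_toNNReal _ h3η,
    Real.coe_toNNReal _ (by positivity)]
  have h3 : ρ⁻¹ * (3 * η) = 3 / (8 * (n + 1)) := by
    rw [hη_def]; field_simp [hρ.pos.ne']
  have h4 : 1 / (2 * (n + 1) : ℝ) = 3 / (8 * (n + 1)) + 1 / (8 * (n + 1)) := by
    field_simp; ring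
  linarith [(hnear i).2.2]

theorem IsMargin.lipschitzWith_fibreMap_sub_self (hρ : IsMargin a ρ) (ha : a ∈ fD n)
    (hnear : IsNear a b (ρ / (8 * (n + 1)))) :
    LipschitzWith 2⁻¹ fun w => fibreMap a ρ b w - w := by
  simp only [fibreMap, add_sub_cancel_left]
  refine (LipschitzWith.finset_sum Finset.univ fun i _ =>
    hρ.lipschitzWith_bump_smul ha hnear i).weaken ?_
  rw [Finset.sum_const, Finset.card_univ, Fintype.card_fin, nsmul_eq_mul, ← NNReal.coe_le_coe]
  push_cast
  rw [Real.coe_toNNReal _ (by positivity), mul_one_div, div_le_iff₀ (by positivity)]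
  linarith

theorem notMem_realiz_iff {w : ℂ} : w ∉ realiz a ↔ 1 < ‖w‖ ∨ ∃ i, ‖w - a.1 i‖ < a.2.1 i := by
  simp only [realiz, Set.mem_ofPred_eq, not_and_or, not_le, not_forall]

theorem IsMargin.fibreMap_mem_realiz_iff (hρ : IsMargin a ρ) (ha : a ∈ fD n) (hb : b ∈ fD n)
    (hnear : IsNear a b (ρ / (8 * (n + 1)))) {w : ℂ} :
    fibreMap a ρ b w ∈ realiz a ↔ w ∈ realiz b := by
  have hdisc := hnear.norm_sub_add_radius_le hρ.pos.le
  have hinj : Injective (fibreMap a ρ b) :=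
    (antilipschitzWith_of_lipschitzWith_sub_id (hρ.lipschitzWith_fibreMap_sub_self ha hnear)
      (by norm_num)).injective
  have hratio (i : Fin n) : 0 < a.2.1 i / b.2.1 i := div_pos (ha.1 i) (hb.1 i)
  rw [← not_iff_not, notMem_realiz_iff, notMem_realiz_iff]
  constructor
  · rintro (hout | ⟨i, hi⟩)
    · have hfix := hinj (hρ.fibreMap_eq_self (b := b) hout.le)
      exact Or.inl (hfix ▸ hout)
    · obtain ⟨w', hw'⟩ := discMap_surjective ha hb (i := i) (fibreMap a ρ b w)
      have hw'_lt : ‖w' - b.1 i‖ < b.2.1 i := by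
        rw [← hw', norm_discMap_sub ha hb] at hi
        nth_rewrite 2 [← div_mul_cancel₀ (a.2.1 i) (hb.1 i).ne'] at hi
        exact lt_of_mul_lt_mul_left hi (hratio i).le
      rw [← hinj ((hρ.fibreMap_eq_discMap (hdisc i) hw'_lt.le).trans hw')]
      exact Or.inr ⟨i, hw'_lt⟩
  · rintro (hout | ⟨i, hi⟩)
    · exact Or.inl (by rwa [hρ.fibreMap_eq_self hout.le])
    · refine Or.inr ⟨i, ?_⟩
      rw [hρ.fibreMap_eq_discMap (hdisc i) hi.le, norm_discMap_sub ha hb]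
      calc a.2.1 i / b.2.1 i * ‖w - b.1 i‖ < a.2.1 i / b.2.1 i * b.2.1 i :=
            mul_lt_mul_of_pos_left hi (hratio i)
        _ = a.2.1 i := div_mul_cancel₀ _ (hb.1 i).ne'

theorem IsMargin.fibreMap_bdry (hρ : IsMargin a ρ) (hb : b ∈ fD n)
    (hdisc : ∀ i, ‖b.1 i - a.1 i‖ + b.2.1 i ≤ a.2.1 i + ρ) (i : Fin (n + 1)) {θ : ℂ}
    (hθ : ‖θ‖ = 1) : fibreMap a ρ b (bdry b i θ) = bdry a i θ := by
  rcases eq_or_ne i 0 with rfl | hi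
  · simp only [bdry, dif_pos]
    exact hρ.fibreMap_eq_self hθ.ge
  · simp only [bdry, dif_neg hi]
    refine (hρ.fibreMap_eq_discMap (hdisc _) (le_of_eq ?_)).trans (discMap_bdry hb θ)
    rw [add_sub_cancel_left, norm_mul, norm_mul, hθ, hb.2.2.1, Complex.norm_real,
      Real.norm_of_nonneg (hb.1 _).le, mul_one, mul_one]

end FibreMap

section Continuity

variable {n : ℕ}

theorem continuous_bump (c : ℂ) (r ρ : ℝ) : Continuous (bump c r ρ) :=
  continuous_subtype_val.comp (continuous_projIcc.comp (by fun_prop))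

theorem continuous_discScale (a : Amb n) (i : Fin n) :
    Continuous fun b : fDo n => discScale a b i :=
  continuous_const.div (by fun_prop) fun b => radius_mul_framing_ne_zero b.2.1 i

theorem continuous_fibreMap (a : Amb n) (ρ : ℝ) :
    Continuous fun q : fDo n × ℂ => fibreMap a ρ q.1 q.2 := by
  unfold fibreMap discMap
  refine continuous_snd.add (continuous_finsetSum _ fun i _ => ?_)
  refine ((continuous_bump _ _ _).comp continuous_snd).smul (Continuous.sub ?_ continuous_snd)
  exact continuous_const.add
    (((continuous_discScale a i).comp continuous_fst).mul (continuous_snd.sub (by fun_prop)))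

theorem isOpen_setOf_isNear (a : Amb n) (η : ℝ) : IsOpen {b : fDo n | IsNear a b η} := by
  simp only [IsNear, Set.ofPred_forall, Set.ofPred_and]
  refine isOpen_iInter_of_finite fun i => ?_
  refine (isOpen_lt (by fun_prop) continuous_const).inter
    ((isOpen_lt (by fun_prop) continuous_const).inter (isOpen_lt ?_ continuous_const))
  exact (continuous_discScale a i).sub continuous_const |>.norm

end Continuity

/-- `ℝfD°(n) → fD°(n)` is a fibre bundle, with local trivializations compatible with the
boundary maps: every `a` has an open neighbourhood `U` and a homeomorphism
`ρ⁻¹(U) ≅ U × |a|` over `U` sending each boundary point `∂ᵢᵇ(θ)` to `(b, ∂ᵢᵃ(θ))`. -/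
theorem RfDo_isFibreBundle_boundary_compatible (n : ℕ) (a : ↥(fDo n)) :
    ∃ U : Set ↥(fDo n), IsOpen U ∧ a ∈ U ∧
      ∃ Φ : {p : ↥(RfDo n) // (p : ↥(fDo n) × ℂ).1 ∈ U} ≃ₜ ↥U × ↥(realiz (a : Amb n)),
        (∀ p, ((Φ p).1 : ↥(fDo n)) = (p.1 : ↥(fDo n) × ℂ).1) ∧
        ∀ (p : {p : ↥(RfDo n) // (p : ↥(fDo n) × ℂ).1 ∈ U}) (i : Fin (n + 1)) (θ : ℂ),
          ‖θ‖ = 1 →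
          (p.1 : ↥(fDo n) × ℂ).2 = bdry ((p.1 : ↥(fDo n) × ℂ).1 : Amb n) i θ →
          ((Φ p).2 : ℂ) = bdry (a : Amb n) i θ := by
  obtain ⟨ρ, hρ⟩ := exists_isMargin a.2
  have ha : (a : Amb n) ∈ fD n := a.2.1
  let U : Set (fDo n) := {b | IsNear (a : Amb n) (b : Amb n) (ρ / (8 * (n + 1)))}
  have hF : Continuous (uncurry fun (b : U) (w : ℂ) => fibreMap (a : Amb n) ρ (b : Amb n) w) :=
    (continuous_fibreMap (a : Amb n) ρ).comp
      ((continuous_subtype_val.comp continuous_fst).prodMk continuous_snd)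
  refine ⟨U, isOpen_setOf_isNear (a : Amb n) _, isNear_self ha (by have := hρ.pos; positivity),
    homeomorphOfPerturbations hF (by norm_num : (2⁻¹ : ℝ≥0) < 1)
      (fun b => hρ.lipschitzWith_fibreMap_sub_self ha b.2)
      (fun b _ => (hρ.fibreMap_mem_realiz_iff ha b.1.2.1 b.2).symm),
    fun _ => rfl, fun p i θ hθ hp => ?_⟩
  change fibreMap (a : Amb n) ρ (p.1.1.1 : Amb n) p.1.1.2 = _
  rw [hp]
  exact hρ.fibreMap_bdry p.1.1.1.2.1 (IsNear.norm_sub_add_radius_le p.2 hρ.pos.le) i hθ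
end

section
/- Let B be a topological space, let X and Y be fibrewise compact, fibrewise Hausdorff spaces over B, and let C be a topological space. Regard X×C and Y×C as fibrewise spaces over B×C (with projections p×id_C and q×id_C), so that the fibre of X×C over (b,c) is X_b×{c}. Then the map Map_B(X,Y) × C → Map_{B×C}(X×C, Y×C), sending ((b,f), c) to ((b,c), f×id), where f×id : X_b×{c} → Y_b×{c} is (x,c) ↦ (f(x),c), is continuous. -/
/-- The fibrewise mapping space `Map_B(X,Y)` of a pair of fibrewise spaces
`p : X → B`, `q : Y → B`: pairs `(b, f)` with `f : X_b → Y_b` continuous. -/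
structure FibreMap {B X Y : Type} [TopologicalSpace X] [TopologicalSpace Y]
    (p : X → B) (q : Y → B) where
  base : B
  map : C({x : X // p x = base}, {y : Y // q y = base})

/-- `K` is a fibrewise compact subspace of `X_W` over `W`. -/
def FibrewiseCompactOn {B X : Type} [TopologicalSpace B] [TopologicalSpace X]
    (p : X → B) (K : Set X) (W : Set B) : Prop :=
  ∃ h : ∀ x ∈ K, p x ∈ W,
    IsClosedMap (fun k : K => (⟨p k.1, h k.1 k.2⟩ : W)) ∧
    ∀ b ∈ W, IsCompact (K ∩ p ⁻¹' {b})

/-- The fibrewise compact-open topology on `Map_B(X,Y)`. -/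
instance fibreMapTopology {B X Y : Type} [TopologicalSpace B] [TopologicalSpace X]
    [TopologicalSpace Y] (p : X → B) (q : Y → B) :
    TopologicalSpace (FibreMap p q) :=
  TopologicalSpace.generateFrom
    {S | ∃ (W : Set B) (K : Set X) (V : Set Y),
      IsOpen W ∧ FibrewiseCompactOn p K W ∧ IsOpen V ∧ V ⊆ q ⁻¹' W ∧
      S = {m : FibreMap p q | m.base ∈ W ∧
        ∀ (x : X), x ∈ K → ∀ hx : p x = m.base, ((m.map ⟨x, hx⟩ : Y)) ∈ V}}

/-- `X` is fibrewise compact over `B`. -/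
def FibrewiseCompact {X B : Type} [TopologicalSpace X] [TopologicalSpace B]
    (p : X → B) : Prop :=
  IsClosedMap p ∧ ∀ b : B, IsCompact (p ⁻¹' {b})

/-- `X` is fibrewise Hausdorff over `B`. -/
def FibrewiseT2 {X B : Type} [TopologicalSpace X] [TopologicalSpace B]
    (p : X → B) : Prop :=
  ∀ x y : X, x ≠ y → p x = p y →
    ∃ u v : Set X, IsOpen u ∧ IsOpen v ∧ x ∈ u ∧ y ∈ v ∧ Disjoint u v

/-- The map `Map_B(X,Y) × C → Map_{B×C}(X×C, Y×C)` sending `((b,f), c)` to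
`((b,c), f × id)`. -/
def fibreMapProd {B C X Y : Type} [TopologicalSpace X] [TopologicalSpace Y]
    [TopologicalSpace C] (p : X → B) (q : Y → B)
    (mc : FibreMap p q × C) :
    FibreMap (fun w : X × C => (p w.1, w.2)) (fun w : Y × C => (q w.1, w.2)) where
  base := (mc.1.base, mc.2)
  map :=
    { toFun := fun w =>
        ⟨(((mc.1.map ⟨w.1.1, congrArg Prod.fst w.2⟩ : {y : Y // q y = mc.1.base}) : Y),
            w.1.2),
          by
            have h1 : q ((mc.1.map ⟨w.1.1, congrArg Prod.fst w.2⟩ :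
                {y : Y // q y = mc.1.base}) : Y) = mc.1.base :=
              (mc.1.map ⟨w.1.1, congrArg Prod.fst w.2⟩).2
            have h2 : (w : X × C).2 = mc.2 := congrArg Prod.snd w.2
            exact Prod.ext_iff.mpr ⟨h1, h2⟩⟩
      continuous_toFun := by
        apply Continuous.subtype_mk
        apply Continuous.prodMk
        · exact continuous_subtype_val.comp
            (mc.1.map.continuous.comp
              (Continuous.subtype_mk (continuous_fst.comp continuous_subtype_val) _))
        · exact continuous_snd.comp continuous_subtype_val }

/-!
Everything reduces to evaluation. Since `X` is fibrewise compact and fibrewise Hausdorff, a point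
`x` of a fibre `X_b` can be separated from the compact set `X_b \ O` for any open `O`, which makes
evaluation `X ×_B Map_B(X,Y) → Y` continuous. Conversely, a map `F : Z → Map_B(X,Y)`
is continuous as soon as `base ∘ F` and the adjoint `X ×_B Z → Y` are: compactness of the fibre
`K_b` gives a uniform neighbourhood along `K_b`, and closedness of `K → W` pushes the nearby
fibres of `K` into it. The adjoint of `fibreMapProd` is evaluation times the identity of `C`.
-/

open Set Filter Topology

theorem Subtype.eventually_nhds_iff {α : Type} [TopologicalSpace α] {P : α → Prop} {a : α}
    (ha : P a) {Q : Subtype P → Prop} :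
    (∀ᶠ s in 𝓝 (⟨a, ha⟩ : Subtype P), Q s) ↔ ∀ᶠ b in 𝓝 a, ∀ hb : P b, Q ⟨b, hb⟩ := by
  rw [nhds_subtype_eq_comap, eventually_comap]
  constructor <;> refine fun h => h.mono ?_
  · exact fun b hb hPb => hb ⟨b, hPb⟩ rfl
  · rintro b hb ⟨c, hc⟩ rfl
    exact hb hc

section Fibrewise

variable {B X : Type} [TopologicalSpace B] [TopologicalSpace X] {p : X → B}

theorem FibrewiseT2.separatedNhds_singleton (hp : FibrewiseT2 p) {x : X} {S : Set X}
    (hS : IsCompact S) (hSx : S ⊆ p ⁻¹' {p x}) (hxS : x ∉ S) : SeparatedNhds {x} S := by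
  refine hS.induction_on (SeparatedNhds.empty_right _) (fun _ _ hst ht => ht.mono subset_rfl hst)
    (fun _ _ hs ht => hs.union_right ht) fun y hy => ?_
  obtain ⟨u, v, hu, hv, hxu, hyv, huv⟩ :=
    hp x y (fun h => hxS (h ▸ hy)) (hSx hy).symm
  exact ⟨v, mem_nhdsWithin_of_mem_nhds (hv.mem_nhds hyv),
    u, v, hu, hv, singleton_subset_iff.2 hxu, subset_rfl, huv⟩

theorem fibrewiseCompactOn_empty (W : Set B) : FibrewiseCompactOn p ∅ W :=
  ⟨fun _ h => h.elim, fun s _ => by simp [eq_empty_of_isEmpty s], fun _ _ => by simp⟩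

theorem FibrewiseCompact.fibrewiseCompactOn_univ (hp : FibrewiseCompact p) {M : Set X}
    (hM : IsClosed M) : FibrewiseCompactOn p M univ :=
  ⟨fun _ _ => mem_univ _, (hp.1.comp hM.isClosedMap_subtype_val).subtype_mk _,
    fun b _ => (hp.2 b).inter_left hM⟩

end Fibrewise

namespace FibreMap

variable {B X Y : Type} [TopologicalSpace B] [TopologicalSpace X] [TopologicalSpace Y]
  {p : X → B} {q : Y → B}

theorem isOpen_setOf_base_mem_mapsTo {W : Set B} {K : Set X} {V : Set Y} (hW : IsOpen W)
    (hK : FibrewiseCompactOn p K W) (hV : IsOpen V) (hVW : V ⊆ q ⁻¹' W) :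
    IsOpen {m : FibreMap p q | m.base ∈ W ∧
      ∀ x ∈ K, ∀ hx : p x = m.base, (m.map ⟨x, hx⟩ : Y) ∈ V} :=
  TopologicalSpace.isOpen_generateFrom_of_mem ⟨W, K, V, hW, hK, hV, hVW, rfl⟩

theorem continuous_base : Continuous (base : FibreMap p q → B) :=
  continuous_def.2 fun W hW => by
    simpa [preimage] using isOpen_setOf_base_mem_mapsTo (q := q) hW
      (fibrewiseCompactOn_empty W) isOpen_empty (empty_subset _)

theorem isOpen_setOf_mapsTo (hp : FibrewiseCompact p) {M : Set X} (hM : IsClosed M)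
    {V : Set Y} (hV : IsOpen V) :
    IsOpen {m : FibreMap p q | ∀ x ∈ M, ∀ hx : p x = m.base, (m.map ⟨x, hx⟩ : Y) ∈ V} := by
  simpa using isOpen_setOf_base_mem_mapsTo isOpen_univ (hp.fibrewiseCompactOn_univ hM) hV
    (subset_univ _)

theorem continuous_eval (hc : FibrewiseCompact p) (hh : FibrewiseT2 p) :
    Continuous fun s : {xm : X × FibreMap p q // p xm.1 = xm.2.base} =>
      (s.1.2.map ⟨s.1.1, s.2⟩ : Y) := by
  refine continuous_iff_continuousAt.2 fun ⟨(x, m₀), hx⟩ => ?_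
  refine (nhds_basis_opens _).tendsto_right_iff.2 fun V ⟨hmV, hV⟩ => ?_
  rw [Subtype.eventually_nhds_iff]
  obtain ⟨O, hO, hOV⟩ :=
    isOpen_induced_iff.1 (hV.preimage (continuous_subtype_val.comp m₀.map.continuous))
  have hOV' (z : X) (hz : p z = m₀.base) : z ∈ O ↔ (m₀.map ⟨z, hz⟩ : Y) ∈ V :=
    Set.ext_iff.1 hOV ⟨z, hz⟩
  have hxO : x ∈ O := (hOV' x hx).2 hmV
  obtain ⟨u, v, hu, hv, hxu, hOv, huv⟩ :=
    hh.separatedNhds_singleton ((hc.2 (p x)).diff hO) sdiff_subset fun h => h.2 hxO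
  have hm₀ : ∀ z ∈ vᶜ, ∀ hz : p z = m₀.base, (m₀.map ⟨z, hz⟩ : Y) ∈ V := by
    intro z hzv hz
    exact (hOV' z hz).1 (by_contra fun h => hzv (hOv ⟨hz.trans hx.symm, h⟩))
  filter_upwards [prod_mem_nhds (hu.mem_nhds (hxu rfl))
    ((isOpen_setOf_mapsTo (q := q) hc hv.isClosed_compl hV).mem_nhds hm₀)]
    with ⟨z, m⟩ ⟨hzu, hm⟩ hz
  exact hm z (disjoint_left.1 huv hzu) hz

theorem continuous_of_continuous_eval {Z : Type} [TopologicalSpace Z] {F : Z → FibreMap p q}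
    (hbase : Continuous fun z => (F z).base)
    (heval : Continuous fun s : {xz : X × Z // p xz.1 = (F xz.2).base} =>
      ((F s.1.2).map ⟨s.1.1, s.2⟩ : Y)) :
    Continuous F := by
  refine continuous_generateFrom_iff.2 ?_
  rintro _ ⟨W, K, V, hW, ⟨hKW, hπ, hKfib⟩, hV, -, rfl⟩
  refine isOpen_iff_mem_nhds.2 fun z₀ ⟨hz₀W, hz₀K⟩ => ?_
  have hloc : ∀ x ∈ K ∩ p ⁻¹' {(F z₀).base},
      {xz : X × Z | ∀ h : p xz.1 = (F xz.2).base, ((F xz.2).map ⟨xz.1, h⟩ : Y) ∈ V} ∈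
        𝓝 x ×ˢ 𝓝 z₀ := by
    rintro x ⟨hxK, hx : p x = (F z₀).base⟩
    rw [← nhds_prod_eq]
    exact (Subtype.eventually_nhds_iff (P := fun xz : X × Z => p xz.1 = (F xz.2).base)
      (a := (x, z₀)) hx).1
      (heval.continuousAt.eventually_mem (hV.mem_nhds (hz₀K x hxK hx)))
  obtain ⟨N, hN, U, hU, hNU⟩ :=
    mem_prod_iff.1 ((hKfib _ hz₀W).mem_nhdsSet_prod_of_forall hloc)
  obtain ⟨N', hN'o, hKN', hN'N⟩ := mem_nhdsSet_iff_exists.1 hN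
  -- The points of `W` whose whole `K`-fibre lies in `N'` form an open set, as `K → W` is closed.
  have hT := isClosedMap_iff_kernImage.1 hπ (hN'o.preimage continuous_subtype_val)
  have hz₀T : (F z₀).base ∈ Subtype.val ''
      kernImage (fun k : K => (⟨p k.1, hKW k.1 k.2⟩ : W)) {k | k.1 ∈ N'} :=
    ⟨⟨_, hz₀W⟩, fun k hk => hKN' ⟨k.2, congrArg Subtype.val hk⟩, rfl⟩
  filter_upwards [hU, hbase.continuousAt.preimage_mem_nhds
    ((hW.isOpenMap_subtype_val _ hT).mem_nhds hz₀T)] with z hzU ⟨w, hwT, hwz⟩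
  replace hwz : (w : B) = (F z).base := hwz
  refine ⟨hwz ▸ w.2, fun x hxK hx => ?_⟩
  have hxN' : x ∈ N' := @hwT ⟨x, hxK⟩ (Subtype.ext (hx.trans hwz.symm))
  exact hNU (show (x, z) ∈ N ×ˢ U from ⟨hN'N hxN', hzU⟩) hx

end FibreMap

theorem fibreMapProd_continuous_general
    {B C X Y : Type} [TopologicalSpace B] [TopologicalSpace C] [TopologicalSpace X]
    [TopologicalSpace Y]
    (p : X → B) (q : Y → B)
    (hXc : FibrewiseCompact p) (hXh : FibrewiseT2 p) :
    Continuous (fibreMapProd p q : FibreMap p q × C →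
      FibreMap (fun w : X × C => (p w.1, w.2)) (fun w : Y × C => (q w.1, w.2))) := by
  refine FibreMap.continuous_of_continuous_eval
    ((FibreMap.continuous_base.comp continuous_fst).prodMk continuous_snd) ?_
  have hrestrict : Continuous fun s : {xz : (X × C) × (FibreMap p q × C) //
      (p xz.1.1, xz.1.2) = (fibreMapProd p q xz.2).base} =>
      (⟨(s.1.1.1, s.1.2.1), congrArg Prod.fst s.2⟩ :
        {xm : X × FibreMap p q // p xm.1 = xm.2.base}) := by
    fun_prop
  exact ((FibreMap.continuous_eval hXc hXh).comp hrestrict).prodMk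
    (continuous_snd.comp (continuous_fst.comp continuous_subtype_val))

/-- For `X`, `Y` fibrewise compact Hausdorff over `B` and any space `C`, the natural map
`Map_B(X,Y) × C → Map_{B×C}(X×C, Y×C)`, `((b,f), c) ↦ ((b,c), f × id)`, is continuous. -/
theorem fibreMapProd_continuous
    {B C X Y : Type} [TopologicalSpace B] [TopologicalSpace C] [TopologicalSpace X]
    [TopologicalSpace Y]
    (p : X → B) (q : Y → B) (hp : Continuous p) (hq : Continuous q)
    (hXc : FibrewiseCompact p) (hXh : FibrewiseT2 p)
    (hYc : FibrewiseCompact q) (hYh : FibrewiseT2 q) :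
    Continuous (fibreMapProd p q : FibreMap p q × C →
      FibreMap (fun w : X × C => (p w.1, w.2)) (fun w : Y × C => (q w.1, w.2))) :=
  fibreMapProd_continuous_general p q hXc hXh
end
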